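/- Let τ_α(x_{1:n}) = Σ_{i ∈ {1,…,N}^n} w(i) ∏_{k=1}^n ρ_{i_k}(x_k | x_{<k}) be the switch distribution over a class of N ≥ 2 models with switch rate α_t = 1/t. Then -log₂ τ_α(x_{1:n}) ≤ min over index sequences i of [(m(i)+1)(log₂ N + log₂ n) - log₂ ∏_{k=1}^n ρ_{i_k}(x_k|x_{<k})]. -/

import Mathlib

open Finset

/-- `diffAt i k` holds iff position `k` (0-based, corresponding to time `k+1`)
differs from position `k-1` in the index sequence `i`. -/
def diffAt {N n : ℕ} (i : Fin n → Fin N) (k : ℕ) : Bool :=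
  if h : k < n then
    decide (i ⟨k, h⟩ ≠ i ⟨k - 1, lt_of_le_of_lt (Nat.sub_le k 1) h⟩)
  else false

/-- The switch prior with rate `α_t = 1/t` on index sequences `i : Fin n → Fin N`
(position `k` is time `k+1`):
`w(i) = (1/N) ∏_{t=2}^{n} [(1/t)/(N-1) if switch at time t, else 1 - 1/t]`. -/
noncomputable def switchPrior (N n : ℕ) (i : Fin n → Fin N) : ℝ :=
  (1 / (N : ℝ)) *
    ∏ k ∈ Finset.Ioo 0 n,
      (if diffAt i k then (1 / ((k : ℝ) + 1)) / ((N : ℝ) - 1) else 1 - 1 / ((k : ℝ) + 1))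

/-- The number of switches in the index sequence `i`. -/
def numSwitches {N n : ℕ} (i : Fin n → Fin N) : ℕ :=
  ((Finset.Ioo 0 n).filter fun k => diffAt i k).card

/-- The switch distribution:
`τ_α(x_{1:n}) = Σ_i w(i) ∏_{k=1}^n ρ_{i_k}(x_k|x_{<k})`, where
`p j t` denotes `ρ_j(x_t|x_{<t})`. -/
noncomputable def tau (N n : ℕ) (p : Fin N → ℕ → ℝ) : ℝ :=
  ∑ i : Fin n → Fin N, switchPrior N n i * ∏ k : Fin n, p (i k) (k.1 + 1)

/-!
A single index sequence `i` already contributes `w(i) ∏ₖ ρ_{iₖ}` to the mixture `τ_α`, so it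
suffices to bound the prior from below by `(N n)^{-(m(i)+1)}`. Each factor of the prior at time
`k + 1` is at least `k / (k + 1)`, times `1 / (N n)` when a switch happens there (as
`k (N - 1) ≤ N n`); the factors `k / (k + 1)` telescope to `1 / n`, and the initial `1 / N`
supplies the remaining power.
-/

open Real

namespace SwitchDistribution

noncomputable def switchFactor (N k : ℕ) (b : Bool) : ℝ :=
  if b then (1 / ((k : ℝ) + 1)) / ((N : ℝ) - 1) else 1 - 1 / ((k : ℝ) + 1)

lemma switchPrior_eq {N n : ℕ} (i : Fin n → Fin N) :
    switchPrior N n i = 1 / N * ∏ k ∈ Ioo 0 n, switchFactor N k (diffAt i k) :=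
  rfl

lemma prod_Ioo_div_succ {n : ℕ} (hn : 1 ≤ n) :
    ∏ k ∈ Ioo 0 n, ((k : ℝ) / (k + 1)) = 1 / n := by
  induction n, hn using Nat.le_induction with
  | base =>
    rw [show Ioo 0 1 = ∅ from rfl]
    simp
  | succ n hn ih =>
    have hn0 : (n : ℝ) ≠ 0 := by positivity
    rw [Ioo_add_one_right_eq_Ioc, ← Ioo_insert_right (by omega), prod_insert (by simp), ih]
    push_cast
    field_simp

lemma prod_ite_diffAt_eq_pow {N n : ℕ} (i : Fin n → Fin N) (c : ℝ) :
    ∏ k ∈ Ioo 0 n, (if diffAt i k then c else 1) = c ^ numSwitches i := by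
  rw [← prod_filter, prod_const]
  rfl

lemma switchFactor_nonneg {N : ℕ} (hN : 1 ≤ N) (k : ℕ) (b : Bool) :
    0 ≤ switchFactor N k b := by
  have hN' : (1 : ℝ) ≤ N := by exact_mod_cast hN
  have hk : 1 / ((k : ℝ) + 1) ≤ 1 := by
    rw [div_le_one (by positivity)]
    linarith [k.cast_nonneg (α := ℝ)]
  cases b
  · simpa [switchFactor] using hk
  · simp only [switchFactor, if_true]
    exact div_nonneg (by positivity) (by linarith)

lemma switchPrior_nonneg {N n : ℕ} (hN : 1 ≤ N) (i : Fin n → Fin N) :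
    0 ≤ switchPrior N n i := by
  rw [switchPrior_eq]
  exact mul_nonneg (by positivity) (prod_nonneg fun k _ => switchFactor_nonneg hN k _)

lemma ite_mul_div_succ_le_switchFactor {N n k : ℕ} (hN : 2 ≤ N) (hk : k < n) (b : Bool) :
    (if b then 1 / ((N : ℝ) * n) else 1) * ((k : ℝ) / (k + 1)) ≤ switchFactor N k b := by
  have hN' : (2 : ℝ) ≤ N := by exact_mod_cast hN
  have hk' : (k : ℝ) + 1 ≤ n := by exact_mod_cast hk
  cases b
  · simp only [switchFactor, Bool.false_eq_true, if_false, one_mul]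
    rw [one_sub_div (by positivity), add_sub_cancel_right]
  · have hN1 : (0 : ℝ) < N - 1 := by linarith
    have hn : (0 : ℝ) < n := by linarith [k.cast_nonneg (α := ℝ)]
    have hswitch : (k : ℝ) * (N - 1) ≤ N * n := by nlinarith
    simp only [switchFactor, if_true]
    rw [div_mul_div_comm, one_mul, div_div, div_le_div_iff₀ (by positivity) (by positivity)]
    nlinarith [mul_le_mul_of_nonneg_right hswitch (by positivity : (0 : ℝ) ≤ k + 1)]

lemma pow_numSwitches_le_switchPrior {N n : ℕ} (hN : 2 ≤ N) (hn : 1 ≤ n) (i : Fin n → Fin N) :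
    (1 / ((N : ℝ) * n)) ^ (numSwitches i + 1) ≤ switchPrior N n i := by
  have hfactors : (1 / ((N : ℝ) * n)) ^ numSwitches i * (1 / n) ≤
      ∏ k ∈ Ioo 0 n, switchFactor N k (diffAt i k) := by
    rw [← prod_ite_diffAt_eq_pow, ← prod_Ioo_div_succ hn, ← prod_mul_distrib]
    refine prod_le_prod (fun k _ => ?_) fun k hk =>
      ite_mul_div_succ_le_switchFactor hN (mem_Ioo.mp hk).2 _
    split_ifs <;> positivity
  calc (1 / ((N : ℝ) * n)) ^ (numSwitches i + 1)
      = 1 / N * ((1 / ((N : ℝ) * n)) ^ numSwitches i * (1 / n)) := by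
        rw [pow_succ]
        ring
    _ ≤ switchPrior N n i := by
        rw [switchPrior_eq]
        gcongr

lemma switchPrior_mul_prod_le_tau {N n : ℕ} (hN : 1 ≤ N) (p : Fin N → ℕ → ℝ)
    (hp : ∀ j t, 0 ≤ p j t) (i : Fin n → Fin N) :
    switchPrior N n i * ∏ k : Fin n, p (i k) (k.1 + 1) ≤ tau N n p :=
  single_le_sum (f := fun j : Fin n → Fin N => switchPrior N n j * ∏ k, p (j k) (k.1 + 1))
    (fun j _ => mul_nonneg (switchPrior_nonneg hN j) (prod_nonneg fun _ _ => hp _ _))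
    (mem_univ i)

end SwitchDistribution

open SwitchDistribution in
/-- `-log₂ τ_α(x_{1:n})` is at most the minimum over all index sequences `i` of
`(m(i)+1)(log₂ N + log₂ n) - log₂ ∏_k ρ_{i_k}(x_k|x_{<k})`. -/
theorem switch_distribution_bound (N n : ℕ) (hN : 2 ≤ N) (hn : 1 ≤ n)
    (p : Fin N → ℕ → ℝ) (hp : ∀ j t, 0 < p j t ∧ p j t ≤ 1) (i : Fin n → Fin N) :
    -Real.logb 2 (tau N n p) ≤
      ((numSwitches i : ℝ) + 1) * (Real.logb 2 N + Real.logb 2 n) -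
        Real.logb 2 (∏ k : Fin n, p (i k) (k.1 + 1)) := by
  have hN0 : (N : ℝ) ≠ 0 := by positivity
  have hn0 : (n : ℝ) ≠ 0 := by positivity
  set P := ∏ k : Fin n, p (i k) (k.1 + 1)
  have hP : 0 < P := prod_pos fun k _ => (hp _ _).1
  have hlower : (1 / ((N : ℝ) * n)) ^ (numSwitches i + 1) * P ≤ tau N n p :=
    (mul_le_mul_of_nonneg_right (pow_numSwitches_le_switchPrior hN hn i) hP.le).trans
      (switchPrior_mul_prod_le_tau (by omega) p (fun j t => (hp j t).1.le) i)
  calc -logb 2 (tau N n p)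
      ≤ -logb 2 ((1 / ((N : ℝ) * n)) ^ (numSwitches i + 1) * P) :=
        neg_le_neg (logb_le_logb_of_le one_lt_two (by positivity) hlower)
    _ = _ := by
        rw [logb_mul (by positivity) hP.ne', logb_pow, one_div, logb_inv, logb_mul hN0 hn0]
        push_cast
        ring
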